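/- With I_0, I_l (l ≥ 1) as above, for l ≥ 1 and k ≥ 0 one has ∂I_l/∂t_k = (I_{l+1}/(1−I_1)) · I_0^k/k! + I_0^{k−l}/(k−l)! · H(k−l), where H is the Heaviside step function (H(x)=1 for x ≥ 0, H(x)=0 for x < 0). -/

import Mathlib

/-!
Every term `t_{n+l} I₀ⁿ/n!` of `I_l` contains the variable `t_{n+l}`, so each coefficient of `I_l`
is a finite sum and `∂/∂t_k` may be applied termwise. By Leibniz, the variable contributes
`δ_{n+l,k} I₀ⁿ/n!` (the Heaviside term) and the power `I₀ⁿ` contributes `I_{l+1} ∂_k I₀`: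
`∂_k I_l = I_{l+1} ∂_k I₀ + H(k-l) I₀^{k-l}/(k-l)!`. For `l = 0` the series `I_0` is `I₀` itself by the
fixed-point equation, so this becomes `(1 - I₁) ∂_k I₀ = I₀^k/k!`, and `1 - I₁` is invertible since `I₁` has no
constant term.
-/

open MvPowerSeries

noncomputable instance : TopologicalSpace (MvPowerSeries ℕ ℝ) :=
  Pi.topologicalSpace

/-- Formal partial derivative `∂/∂t_k` of a multivariate formal power series. -/
noncomputable def pderivMv (k : ℕ) (f : MvPowerSeries ℕ ℝ) : MvPowerSeries ℕ ℝ :=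
  fun d => ((d k : ℝ) + 1) * MvPowerSeries.coeff (d + Finsupp.single k 1) f

instance : IsTopologicalRing (MvPowerSeries ℕ ℝ) := WithPiTopology.instIsTopologicalRing ℕ ℝ

instance : T2Space (MvPowerSeries ℕ ℝ) := WithPiTopology.instT2Space

theorem pderivMv_eq_pderiv (k : ℕ) (f : MvPowerSeries ℕ ℝ) : pderivMv k f = pderiv ℝ k f := by
  ext d
  rw [coeff_pderiv, mul_comm]
  rfl

theorem hasSum_ite_add_eq {M : Type*} [AddCommMonoid M] [TopologicalSpace M] (f : ℕ → M)
    (l k : ℕ) :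
    HasSum (fun n => if n + l = k then f n else 0) (if l ≤ k then f (k - l) else 0) := by
  split_ifs with hlk
  · convert hasSum_ite_eq (k - l) (f (k - l)) using 2 with n
    simp only [show n + l = k ↔ n = k - l by omega]
    split_ifs with h
    exacts [congrArg f h, rfl]
  · convert hasSum_zero with n
    exact if_neg (by omega)

namespace MvPowerSeries

variable {σ R : Type*}

theorem coeff_X_mul_of_eq_zero [Semiring R] {d : σ →₀ ℕ} {i : σ} (hd : d i = 0)
    (f : MvPowerSeries σ R) : coeff d (X i * f) = 0 := by
  rw [X, coeff_monomial_mul, if_neg]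
  simp [Finsupp.single_le_iff, hd]

namespace WithPiTopology

theorem summable_X_mul [Semiring R] [TopologicalSpace R] {ι : Type*} {v : ι → σ}
    (hv : Function.Injective v) (g : ι → MvPowerSeries σ R) :
    Summable fun n => X (v n) * g n := by
  rw [summable_iff_summable_coeff]
  intro d
  refine summable_of_hasFiniteSupport <| (d.support.finite_toSet.preimage hv.injOn).subset ?_
  intro n hn
  by_contra h
  exact hn (coeff_X_mul_of_eq_zero (by simpa using h) _)

theorem continuous_pderiv [CommSemiring R] [TopologicalSpace R] [IsTopologicalSemiring R]
    (i : σ) : Continuous (pderiv R i) := by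
  refine continuous_pi fun d => ?_
  simp_rw [← coeff_apply, coeff_pderiv]
  fun_prop

end WithPiTopology

end MvPowerSeries

section

open MvPowerSeries.WithPiTopology

noncomputable def iTerm (I0 : MvPowerSeries ℕ ℝ) (l n : ℕ) : MvPowerSeries ℕ ℝ :=
  (n.factorial : ℝ)⁻¹ • (X (n + l) * I0 ^ n)

/-- The paper's `I_l`; the fixed-point equation for `I₀` reads `I0 = iSeries I0 0`. -/
noncomputable def iSeries (I0 : MvPowerSeries ℕ ℝ) (l : ℕ) : MvPowerSeries ℕ ℝ :=
  ∑' n, iTerm I0 l n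

variable (I0 : MvPowerSeries ℕ ℝ)

theorem hasSum_iTerm (l : ℕ) : HasSum (iTerm I0 l) (iSeries I0 l) :=
  ((summable_X_mul (add_left_injective l) _).congr fun _ => mul_smul_comm _ _ _).hasSum

theorem constantCoeff_iSeries (l : ℕ) : constantCoeff (iSeries I0 l) = 0 := by
  refine ((hasSum_iTerm I0 l).map constantCoeff (continuous_constantCoeff ℝ)).unique ?_
  convert hasSum_zero with n
  rw [Function.comp_apply, iTerm, ← coeff_zero_eq_constantCoeff_apply, coeff_smul,
    coeff_zero_X_mul, mul_zero]

theorem pderiv_iTerm (k l n : ℕ) :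
    pderiv ℝ k (iTerm I0 l n) = (if n + l = k then (n.factorial : ℝ)⁻¹ • I0 ^ n else 0)
      + (n.factorial : ℝ)⁻¹ • (X (n + l) * pderiv ℝ k (I0 ^ n)) := by
  classical
  rw [iTerm, Derivation.map_smul, Derivation.leibniz, pderiv_X, smul_eq_mul, smul_eq_mul,
    smul_add, Pi.single_apply, add_comm]
  split_ifs <;> simp only [mul_one, mul_zero, smul_zero, zero_add]

theorem inv_factorial_smul_X_mul_pderiv_pow_succ (k l n : ℕ) :
    ((n + 1).factorial : ℝ)⁻¹ • (X (n + 1 + l) * pderiv ℝ k (I0 ^ (n + 1)))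
      = iTerm I0 (l + 1) n * pderiv ℝ k I0 := by
  rw [Derivation.leibniz_pow, iTerm, Nat.add_sub_cancel, ← Nat.cast_smul_eq_nsmul ℝ,
    add_right_comm, add_assoc, Nat.factorial_succ]
  simp only [smul_eq_mul, mul_smul_comm, smul_mul_assoc, smul_smul, mul_assoc]
  congr 1
  push_cast
  field_simp

theorem hasSum_inv_factorial_smul_X_mul_pderiv_pow (k l : ℕ) :
    HasSum (fun n => (n.factorial : ℝ)⁻¹ • (X (n + l) * pderiv ℝ k (I0 ^ n)))
      (iSeries I0 (l + 1) * pderiv ℝ k I0) := by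
  have h := (hasSum_iTerm I0 (l + 1)).mul_right (pderiv ℝ k I0)
  simp_rw [← inv_factorial_smul_X_mul_pderiv_pow_succ] at h
  have h' := (hasSum_nat_add_iff 1
    (f := fun n => (n.factorial : ℝ)⁻¹ • (X (n + l) * pderiv ℝ k (I0 ^ n)))).mp h
  rwa [Finset.sum_range_one, pow_zero, Derivation.map_one_eq_zero, mul_zero, smul_zero,
    add_zero] at h'

theorem pderiv_iSeries (k l : ℕ) :
    pderiv ℝ k (iSeries I0 l)
      = iSeries I0 (l + 1) * pderiv ℝ k I0
        + if l ≤ k then (((k - l).factorial : ℝ))⁻¹ • I0 ^ (k - l) else 0 := by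
  have hD : HasSum (fun n => pderiv ℝ k (iTerm I0 l n)) (pderiv ℝ k (iSeries I0 l)) :=
    (hasSum_iTerm I0 l).map (pderiv ℝ k) (continuous_pderiv k)
  refine hD.unique ?_
  simp_rw [pderiv_iTerm, add_comm (iSeries I0 (l + 1) * _)]
  exact (hasSum_ite_add_eq _ l k).add (hasSum_inv_factorial_smul_X_mul_pderiv_pow I0 k l)

theorem pderiv_eq_of_eq_iSeries_zero (h : I0 = iSeries I0 0) (k : ℕ) :
    pderiv ℝ k I0 = (1 - iSeries I0 1)⁻¹ * ((k.factorial : ℝ)⁻¹ • I0 ^ k) := by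
  have hfix := pderiv_iSeries I0 k 0
  rw [← h, if_pos k.zero_le, Nat.sub_zero] at hfix
  have hunit : constantCoeff (1 - iSeries I0 1) ≠ 0 := by simp [constantCoeff_iSeries]
  rw [mul_comm, MvPowerSeries.eq_mul_inv_iff_mul_eq hunit]
  linear_combination hfix

end

theorem pderiv_Il_general (I0 : MvPowerSeries ℕ ℝ)
    (hfix : I0 = ∑' n : ℕ, ((n.factorial : ℝ))⁻¹ • (MvPowerSeries.X n * I0 ^ n))
    (I : ℕ → MvPowerSeries ℕ ℝ)
    (hI : ∀ k, I k = ∑' n : ℕ, ((n.factorial : ℝ))⁻¹ •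
        (MvPowerSeries.X (n + k) * I0 ^ n)) :
    ∀ l k : ℕ, 1 ≤ l →
      pderivMv k (I l)
        = (I (l + 1) * (1 - I 1)⁻¹) * (((k.factorial : ℝ))⁻¹ • I0 ^ k)
          + if l ≤ k then (((k - l).factorial : ℝ))⁻¹ • I0 ^ (k - l) else 0 := by
  intro l k _
  obtain rfl : I = iSeries I0 := funext hI
  rw [pderivMv_eq_pderiv, pderiv_iSeries, pderiv_eq_of_eq_iSeries_zero I0 hfix, mul_assoc]

/-- For `l ≥ 1` and `k ≥ 0`,
`∂I_l/∂t_k = (I_{l+1}/(1−I₁)) I₀^k/k! + I₀^{k−l}/(k−l)! · H(k−l)`,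
where the Heaviside term is present exactly when `l ≤ k`. -/
theorem pderiv_Il (I0 : MvPowerSeries ℕ ℝ)
    (hc : MvPowerSeries.constantCoeff I0 = 0)
    (hfix : I0 = ∑' n : ℕ, ((n.factorial : ℝ))⁻¹ • (MvPowerSeries.X n * I0 ^ n))
    (I : ℕ → MvPowerSeries ℕ ℝ)
    (hI : ∀ k, I k = ∑' n : ℕ, ((n.factorial : ℝ))⁻¹ •
        (MvPowerSeries.X (n + k) * I0 ^ n)) :
    ∀ l k : ℕ, 1 ≤ l →
      pderivMv k (I l)
        = (I (l + 1) * (1 - I 1)⁻¹) * (((k.factorial : ℝ))⁻¹ • I0 ^ k)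
          + if l ≤ k then (((k - l).factorial : ℝ))⁻¹ • I0 ^ (k - l) else 0 :=
  pderiv_Il_general I0 hfix I hI
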